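/- arXiv:2602.16537 — 4 statements merged into one kernel-verified Lean document; each statement's English description precedes it below -/
import Mathlib

section
/- Let [0,1] be partitioned into k intervals I_j = [(j−1)/k, j/k) for j < k and I_k = [(k−1)/k, 1]. Let C ⊆ [0,1] be an arbitrary measurable set, let a_j = μ(C ∩ I_j) where μ is Lebesgue measure, let ā = (1/k)·Σ_j a_j, and let ã_j = a_j − ā. Then Σ_{j=1}^k ã_j² ≤ μ(C)·(1 − μ(C))/k ≤ 1/(4k). -/
open MeasureTheory

/-- Upper bound in Lemma on `Σ ã_j²`: partition `[0,1]` into `k` equal intervals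
`I_j`, let `a_j = μ(C ∩ I_j)`, `ā = (1/k)Σ a_j`, `ã_j = a_j − ā`. Then
`Σ ã_j² ≤ μ(C)(1 − μ(C))/k ≤ 1/(4k)`. -/
theorem stmt7 (k : ℕ) (hk : 0 < k) (C : Set ℝ) (hC : MeasurableSet C)
    (hCsub : C ⊆ Set.Icc 0 1)
    (I : Fin k → Set ℝ)
    (hI : ∀ j : Fin k, I j =
      if (j : ℕ) + 1 < k then Set.Ico ((j : ℝ) / k) (((j : ℝ) + 1) / k)
      else Set.Icc ((j : ℝ) / k) 1)
    (a : Fin k → ℝ) (ha : ∀ j, a j = (volume (C ∩ I j)).toReal)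
    (abar : ℝ) (habar : abar = (1 / (k : ℝ)) * ∑ j, a j) :
    ∑ j : Fin k, (a j - abar) ^ 2
        ≤ (volume C).toReal * (1 - (volume C).toReal) / k ∧
      (volume C).toReal * (1 - (volume C).toReal) / k ≤ 1 / (4 * k) := by
  have hkR : (0:ℝ) < k := by exact_mod_cast hk
  have hImeas : ∀ j : Fin k, MeasurableSet (I j) := by
    intro j; rw [hI]; split
    · exact measurableSet_Ico
    · exact measurableSet_Icc
  -- volume of each interval is 1/k
  have hvolI : ∀ j : Fin k, volume (I j) = ENNReal.ofReal (1 / k) := by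
    intro j
    rw [hI]
    split_ifs with h
    · rw [Real.volume_Ico]
      congr 1
      field_simp
      ring
    · rw [Real.volume_Icc]
      congr 1
      have : (j : ℕ) + 1 = k := by omega
      have hj : ((j : ℕ) : ℝ) = (k : ℝ) - 1 := by
        have := congrArg (Nat.cast : ℕ → ℝ) this
        push_cast at this; linarith
      rw [hj]
      field_simp
      ring
  have hIne : ∀ j : Fin k, volume (C ∩ I j) ≠ ⊤ := by
    intro j
    exact ne_top_of_le_ne_top (by simp) (le_trans (measure_mono Set.inter_subset_right) (hvolI j).le)
  have hanonneg : ∀ j, 0 ≤ a j := by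
    intro j; rw [ha]; exact ENNReal.toReal_nonneg
  have hale : ∀ j, a j ≤ 1 / k := by
    intro j
    rw [ha]
    have : volume (C ∩ I j) ≤ volume (I j) := measure_mono Set.inter_subset_right
    rw [hvolI j] at this
    calc (volume (C ∩ I j)).toReal ≤ (ENNReal.ofReal (1/k)).toReal :=
          ENNReal.toReal_mono (by simp) this
      _ = 1 / k := ENNReal.toReal_ofReal (by positivity)
  -- pairwise disjoint
  have hIsub1 : ∀ j : Fin k, I j ⊆ Set.Ici ((j:ℝ)/k) := by
    intro j x hx
    rw [hI] at hx
    split at hx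
    · exact hx.1
    · exact hx.1
  have hdisj : Pairwise (Function.onFun Disjoint fun j : Fin k => C ∩ I j) := by
    intro i j hij
    have key : ∀ i j : Fin k, (i:ℕ) < (j:ℕ) → Disjoint (I i) (I j) := by
      intro i j hlt
      have hi1 : (i:ℕ) + 1 < k := lt_of_le_of_lt (by omega) j.isLt
      rw [Set.disjoint_left]
      intro x hxi hxj
      rw [hI i, if_pos hi1] at hxi
      have h1 : x < ((i:ℝ)+1)/k := hxi.2
      have h2 : ((j:ℝ))/k ≤ x := hIsub1 j hxj
      have : ((i:ℝ)+1)/k ≤ ((j:ℝ))/k := by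
        apply div_le_div_of_nonneg_right _ hkR.le
        exact_mod_cast Nat.succ_le_of_lt hlt
      linarith
    rcases lt_or_gt_of_ne (Fin.val_ne_of_ne hij) with h | h
    · exact Set.disjoint_of_subset Set.inter_subset_right Set.inter_subset_right (key i j h)
    · exact Set.disjoint_of_subset Set.inter_subset_right Set.inter_subset_right ((key j i h).symm)
  -- coverage
  have hcover : C ⊆ ⋃ j, I j := by
    intro x hx
    obtain ⟨hx0, hx1⟩ := hCsub hx
    by_cases hx1' : x < 1
    · have hxk : 0 ≤ x * k := by positivity
      set n := ⌊x * k⌋₊ with hn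
      have hnle : (n:ℝ) ≤ x * k := Nat.floor_le hxk
      have hnlt : x * k < n + 1 := Nat.lt_floor_add_one _
      have hnk : n < k := by
        have : x * k < k := by nlinarith
        have : (n:ℝ) < k := lt_of_le_of_lt hnle this
        exact_mod_cast this
      refine Set.mem_iUnion.mpr ⟨⟨n, hnk⟩, ?_⟩
      rw [hI]
      have hlb : (n:ℝ)/k ≤ x := by rw [div_le_iff₀ hkR]; linarith
      split_ifs with h
      · refine ⟨hlb, ?_⟩
        rw [lt_div_iff₀ hkR]; push_cast; linarith
      · exact ⟨hlb, hx1⟩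
    · have hx1 : x = 1 := le_antisymm hx1 (not_lt.mp hx1')
      refine Set.mem_iUnion.mpr ⟨⟨k-1, by omega⟩, ?_⟩
      rw [hI]
      have : ¬ (k - 1 + 1 < k) := by omega
      rw [if_neg this]
      constructor
      · rw [hx1, div_le_one hkR]
        exact_mod_cast Nat.sub_le k 1
      · exact hx1.le
  -- sum of a equals measure of C
  have hsum : ∑ j, a j = (volume C).toReal := by
    have hCun : C = ⋃ j, C ∩ I j := by
      ext x; simp only [Set.mem_iUnion, Set.mem_inter_iff]
      constructor
      · intro hx
        obtain ⟨j, hj⟩ := Set.mem_iUnion.mp (hcover hx)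
        exact ⟨j, hx, hj⟩
      · rintro ⟨j, hx, _⟩; exact hx
    have := measure_iUnion (μ := volume) hdisj (fun j => hC.inter (hImeas j))
    rw [← hCun] at this
    rw [this, tsum_fintype, ENNReal.toReal_sum (fun j _ => hIne j)]
    simp [ha]
  set S := (volume C).toReal with hS
  have hSnn : 0 ≤ S := ENNReal.toReal_nonneg
  -- variance identity
  have hvar : ∑ j : Fin k, (a j - abar) ^ 2 = (∑ j, (a j)^2) - S^2/k := by
    have hcard : (Finset.univ : Finset (Fin k)).card = k := by simp
    have habar' : abar = S / k := by rw [habar, hsum]; ring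
    have : ∑ j : Fin k, (a j - abar) ^ 2
        = ∑ j, ((a j)^2 - 2*abar*(a j) + abar^2) := by
      apply Finset.sum_congr rfl; intro j _; ring
    rw [this, Finset.sum_add_distrib, Finset.sum_sub_distrib, ← Finset.mul_sum,
        Finset.sum_const, hcard, hsum, habar', nsmul_eq_mul]
    field_simp
    ring
  have hsq : ∑ j, (a j)^2 ≤ S/k := by
    calc ∑ j, (a j)^2 ≤ ∑ j, (1/k) * a j := by
          apply Finset.sum_le_sum
          intro j _
          have := hale j
          have := hanonneg j
          nlinarith
      _ = S/k := by rw [← Finset.mul_sum, hsum]; ring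
  constructor
  · rw [hvar]
    have : S * (1 - S) / k = S/k - S^2/k := by field_simp
    rw [this]
    linarith
  · rw [div_le_div_iff₀ hkR (by positivity)]
    nlinarith [sq_nonneg (S - 1/2)]
end

section
/- Let [0,1] be partitioned into k equal intervals I_1,...,I_k, and let C ⊆ [0,1] be a union of at most K intervals. With a_j = μ(C ∩ I_j), ā = (1/k)Σ_j a_j, and ã_j = a_j − ā, one has Σ_{j=1}^k ã_j² ≥ (1/k)·max{ μ(C)(1 − μ(C)) − 2K/k , 0 }. -/
open MeasureTheory

/-- Lower bound in Lemma on `Σ ã_j²`: partition `[0,1]` into `k` equal intervals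
`I_j` and let `C ⊆ [0,1]` be a union of at most `K` intervals (order-connected
sets). With `a_j = μ(C ∩ I_j)`, `ā = (1/k)Σ a_j`, `ã_j = a_j − ā`, one has
`Σ ã_j² ≥ (1/k)·max{μ(C)(1 − μ(C)) − 2K/k, 0}`. -/
theorem stmt8 (k K : ℕ) (hk : 0 < k) (hK : 0 < K) (C : Set ℝ)
    (hCsub : C ⊆ Set.Icc 0 1)
    (f : Fin K → Set ℝ) (hf : ∀ i, (f i).OrdConnected) (hCf : C = ⋃ i, f i)
    (I : Fin k → Set ℝ)
    (hI : ∀ j : Fin k, I j =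
      if (j : ℕ) + 1 < k then Set.Ico ((j : ℝ) / k) (((j : ℝ) + 1) / k)
      else Set.Icc ((j : ℝ) / k) 1)
    (a : Fin k → ℝ) (ha : ∀ j, a j = (volume (C ∩ I j)).toReal)
    (abar : ℝ) (habar : abar = (1 / (k : ℝ)) * ∑ j, a j) :
    (1 / (k : ℝ)) * max ((volume C).toReal * (1 - (volume C).toReal) - 2 * K / k) 0
      ≤ ∑ j : Fin k, (a j - abar) ^ 2 := by
  have hk' : (0:ℝ) < k := by exact_mod_cast hk
  have hk0 : (k:ℝ) ≠ 0 := ne_of_gt hk'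
  set m := (volume C).toReal with hm
  -- membership characterization
  have hIff : ∀ (j : Fin k) (y : ℝ), y ∈ I j ↔
      ((j:ℝ)/k ≤ y ∧ if (j:ℕ)+1 < k then y < ((j:ℝ)+1)/k else y ≤ 1) := by
    intro j y
    rw [hI j]
    split <;> simp [Set.mem_Ico, Set.mem_Icc]
  have hle1 : ∀ (j : Fin k) (y : ℝ), y ∈ I j → y ≤ 1 := by
    intro j y hy
    rw [hIff] at hy
    rcases hy with ⟨h1, h2⟩
    split at h2
    · rename_i hc
      have : ((j:ℝ)+1)/k ≤ 1 := by
        rw [div_le_one hk']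
        exact_mod_cast Nat.le_of_lt hc
      linarith
    · exact h2
  -- disjointness, pointwise
  have hdisjpt : ∀ (j₁ j₂ : Fin k) (x : ℝ), x ∈ I j₁ → x ∈ I j₂ → j₁ = j₂ := by
    have H : ∀ (j₁ j₂ : Fin k) (x : ℝ), (j₁:ℕ) < (j₂:ℕ) → x ∈ I j₁ → x ∈ I j₂ → False := by
      intro j₁ j₂ x hlt h1 h2
      rw [hIff] at h1 h2
      have hc : (j₁:ℕ) + 1 < k := lt_of_le_of_lt hlt j₂.isLt
      rw [if_pos hc] at h1
      have hcast' : ((j₁:ℝ)+1) ≤ (j₂:ℝ) := by exact_mod_cast hlt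
      have : ((j₁:ℝ)+1)/k ≤ (j₂:ℝ)/k := by gcongr
      linarith [h1.1, h1.2, h2.1]
    intro j₁ j₂ x h1 h2
    rcases lt_trichotomy ((j₁:ℕ)) ((j₂:ℕ)) with h | h | h
    · exact absurd (H j₁ j₂ x h h1 h2) (by simp)
    · exact Fin.ext h
    · exact absurd (H j₂ j₁ x h h2 h1) (by simp)
  -- measurability
  have hCmeas : MeasurableSet C := by
    rw [hCf]; exact MeasurableSet.iUnion fun i => (hf i).measurableSet
  have hImeas : ∀ j, MeasurableSet (I j) := by
    intro j; rw [hI j]; split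
    · exact measurableSet_Ico
    · exact measurableSet_Icc
  -- volume of I j
  have hIvol : ∀ j, volume (I j) = ENNReal.ofReal (1/k) := by
    intro j
    rw [hI j]
    split
    · rename_i hc
      rw [Real.volume_Ico]
      congr 1
      ring
    · rename_i hc
      have hjk : (j:ℕ) + 1 = k := by omega
      rw [Real.volume_Icc]
      congr 1
      have : ((j:ℕ):ℝ) + 1 = (k:ℝ) := by exact_mod_cast hjk
      field_simp
      linarith
  -- bounds on a j
  have ha0 : ∀ j, 0 ≤ a j := fun j => by rw [ha j]; exact ENNReal.toReal_nonneg
  have ha1 : ∀ j, a j ≤ 1/k := by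
    intro j
    rw [ha j]
    apply ENNReal.toReal_le_of_le_ofReal (by positivity)
    rw [← hIvol j]
    exact measure_mono Set.inter_subset_right
  -- cover
  have hcover : Set.Icc (0:ℝ) 1 ⊆ ⋃ j, I j := by
    intro x hx
    rcases hx with ⟨hx0, hx1⟩
    set n := ⌊x * k⌋₊ with hn
    have hxk0 : 0 ≤ x * k := by positivity
    have hnle : (n:ℝ) ≤ x * k := Nat.floor_le hxk0
    have hnlt : x * k < n + 1 := Nat.lt_floor_add_one _
    have hnk : n ≤ k := by
      have : (n:ℝ) ≤ k := le_trans hnle (by nlinarith)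
      exact_mod_cast this
    rcases eq_or_lt_of_le hnk with heq | hlt
    · -- n = k, so x = 1
      have hx1' : (1:ℝ) ≤ x := by
        have : (k:ℝ) ≤ x * k := by rw [← heq] at hnle ⊢; exact hnle
        nlinarith
      have hxe : x = 1 := le_antisymm hx1 hx1'
      refine Set.mem_iUnion.mpr ⟨⟨k-1, by omega⟩, ?_⟩
      rw [hIff]
      have hc : ¬ ((⟨k-1, by omega⟩ : Fin k) : ℕ) + 1 < k := by simp; omega
      rw [if_neg hc]
      constructor
      · have : ((⟨k-1, by omega⟩ : Fin k) : ℝ)/k ≤ 1 := by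
          rw [div_le_one hk']
          exact_mod_cast Nat.le_of_lt (by omega : k - 1 < k)
        simpa [hxe] using this
      · exact hx1
    · refine Set.mem_iUnion.mpr ⟨⟨n, hlt⟩, ?_⟩
      rw [hIff]
      have hj : ((⟨n, hlt⟩ : Fin k) : ℝ) = (n:ℝ) := by simp
      constructor
      · rw [hj, div_le_iff₀ hk']; linarith
      · split
        · rw [hj, lt_div_iff₀ hk']; linarith
        · exact hx1
  -- sum of a j = m
  have hsum : ∑ j, a j = m := by
    have hCeq : C = ⋃ j, C ∩ I j := by
      rw [← Set.inter_iUnion]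
      exact (Set.inter_eq_self_of_subset_left (hCsub.trans hcover)).symm
    have hd : Pairwise (Function.onFun Disjoint fun j => C ∩ I j) := by
      intro j₁ j₂ hne
      simp only [Function.onFun]
      rw [Set.disjoint_left]
      intro x hx1 hx2
      exact hne (hdisjpt j₁ j₂ x hx1.2 hx2.2)
    have hvol : volume C = ∑ j, volume (C ∩ I j) := by
      conv_lhs => rw [hCeq]
      rw [measure_iUnion hd (fun j => hCmeas.inter (hImeas j)), tsum_fintype]
    have hfin : ∀ j ∈ Finset.univ, volume (C ∩ I j) ≠ ⊤ := by
      intro j _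
      refine ne_top_of_le_ne_top ?_ (measure_mono Set.inter_subset_right)
      rw [hIvol j]; exact ENNReal.ofReal_ne_top
    rw [hm, hvol, ENNReal.toReal_sum hfin]
    exact Finset.sum_congr rfl fun j _ => ha j
  -- the set of partial indices
  set P : Finset (Fin k) := Finset.univ.filter (fun j => 0 < a j ∧ a j < 1/k) with hP
  -- endpoint map
  have key : ∀ j : Fin k, ∃ p : Fin K × Bool,
      j ∈ P → (if p.2 then sInf (f p.1) else sSup (f p.1)) ∈ I j := by
    intro j
    by_cases hjP : j ∈ P
    swap
    · exact ⟨(⟨0, hK⟩, true), fun h => absurd h hjP⟩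
    have hja : 0 < a j ∧ a j < 1/k := by
      have := Finset.mem_filter.mp hjP; exact this.2
    -- find i with positive measure intersection
    have hne0 : volume (C ∩ I j) ≠ 0 := by
      intro h
      rw [ha j, h] at hja
      simp at hja
    have hun : C ∩ I j = ⋃ i, f i ∩ I j := by
      rw [hCf, Set.iUnion_inter]
    obtain ⟨i, hi⟩ : ∃ i, volume (f i ∩ I j) ≠ 0 := by
      by_contra H; push_neg at H
      exact hne0 (by rw [hun]; simpa [measure_iUnion_null_iff] using H)
    obtain ⟨x, hxf, hxI⟩ := nonempty_of_measure_ne_zero hi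
    have hfC : f i ⊆ C := by rw [hCf]; exact Set.subset_iUnion f i
    have hfsub : f i ⊆ Set.Icc 0 1 := hfC.trans hCsub
    have hfne : (f i).Nonempty := ⟨x, hxf⟩
    have hbddb : BddBelow (f i) := ⟨0, fun z hz => (hfsub hz).1⟩
    have hbdda : BddAbove (f i) := ⟨1, fun z hz => (hfsub hz).2⟩
    have hinf_le : sInf (f i) ≤ x := csInf_le hbddb hxf
    have hle_sup : x ≤ sSup (f i) := le_csSup hbdda hxf
    have hsup_le1 : sSup (f i) ≤ 1 := csSup_le hfne fun z hz => (hfsub hz).2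
    rw [hIff] at hxI
    by_cases hinf : sInf (f i) ∈ I j
    · exact ⟨(i, true), fun _ => hinf⟩
    by_cases hsup : sSup (f i) ∈ I j
    · exact ⟨(i, false), fun _ => hsup⟩
    exfalso
    -- in the last-interval case sSup must be in I j
    by_cases hc : (j:ℕ)+1 < k
    swap
    · apply hsup
      rw [hIff, if_neg hc]
      exact ⟨le_trans hxI.1 hle_sup, hsup_le1⟩
    rw [if_pos hc] at hxI
    -- sInf < j/k
    have hinfL : sInf (f i) < (j:ℝ)/k := by
      by_contra h
      push_neg at h
      exact hinf (by rw [hIff, if_pos hc]; exact ⟨h, lt_of_le_of_lt hinf_le hxI.2⟩)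
    -- sSup ≥ (j+1)/k
    have hsupR : ((j:ℝ)+1)/k ≤ sSup (f i) := by
      by_contra h
      push_neg at h
      exact hsup (by rw [hIff, if_pos hc]; exact ⟨le_trans hxI.1 hle_sup, h⟩)
    -- I j ⊆ f i
    have hIsub : I j ⊆ f i := by
      intro y hy
      rw [hIff, if_pos hc] at hy
      obtain ⟨z₁, hz₁, hz₁lt⟩ := exists_lt_of_csInf_lt hfne (lt_of_lt_of_le hinfL hy.1)
      obtain ⟨z₂, hz₂, hz₂gt⟩ := exists_lt_of_lt_csSup hfne (lt_of_lt_of_le hy.2 hsupR)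
      exact (hf i).out hz₁ hz₂ ⟨le_of_lt hz₁lt, le_of_lt hz₂gt⟩
    have : a j = 1/k := by
      rw [ha j, Set.inter_eq_self_of_subset_right (hIsub.trans hfC), hIvol j,
        ENNReal.toReal_ofReal (by positivity)]
    linarith [hja.2, this.ge, this.le]
  choose φ hφ using key
  have hPcard : (P.card : ℝ) ≤ 2 * K := by
    have hinj : Set.InjOn φ P := by
      intro j₁ h₁ j₂ h₂ heq
      have e₁ := hφ j₁ (by simpa using h₁)
      have e₂ := hφ j₂ (by simpa using h₂)
      rw [heq] at e₁
      exact hdisjpt j₁ j₂ _ e₁ e₂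
    have := Finset.card_le_card_of_injOn φ (fun j _ => Finset.mem_univ (φ j)) hinj
    have h2 : (Finset.univ : Finset (Fin K × Bool)).card = 2 * K := by
      simp [Finset.card_univ, mul_comm]
    rw [h2] at this
    exact_mod_cast this
  -- key inequality: Σ a_j² ≥ m/k - 2K/k²
  have hs2 : m/k - 2*K/k^2 ≤ ∑ j, (a j)^2 := by
    have hpt : ∀ j ∈ Finset.univ, a j / k - (a j)^2 ≤ (if j ∈ P then 1/(k:ℝ)^2 else 0) := by
      intro j _
      by_cases hjP : j ∈ P
      · rw [if_pos hjP]
        have h1 := ha0 j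
        have h2 := ha1 j
        have hkinv : (0:ℝ) < 1/k := by positivity
        have e : a j / k - (a j)^2 = a j * (1/(k:ℝ) - a j) := by ring
        rw [e]
        calc a j * (1/(k:ℝ) - a j) ≤ (1/(k:ℝ)) * (1/k) :=
              mul_le_mul h2 (by linarith) (by linarith) hkinv.le
          _ = 1/(k:ℝ)^2 := by ring
      · rw [if_neg hjP]
        have hnot : ¬ (0 < a j ∧ a j < 1/k) := by
          intro h; exact hjP (Finset.mem_filter.mpr ⟨Finset.mem_univ j, h⟩)
        push_neg at hnot
        rcases eq_or_lt_of_le (ha0 j) with heq | hpos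
        · rw [← heq]; ring_nf; exact le_refl _
        · have : a j = 1/k := le_antisymm (ha1 j) (hnot hpos)
          rw [this]; ring_nf; exact le_refl _
    have hsum_le := Finset.sum_le_sum hpt
    have hsum_ite : ∑ j : Fin k, (if j ∈ P then 1/(k:ℝ)^2 else 0) = (P.card : ℝ) * (1/(k:ℝ)^2) := by
      rw [Finset.sum_ite_mem, Finset.univ_inter, Finset.sum_const, nsmul_eq_mul]
    have hsum_lhs : ∑ j : Fin k, (a j / k - (a j)^2) = m/k - ∑ j, (a j)^2 := by
      rw [Finset.sum_sub_distrib, ← Finset.sum_div, hsum]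
    rw [hsum_lhs, hsum_ite] at hsum_le
    have hPle : (P.card : ℝ) * (1/k^2) ≤ 2*K/k^2 := by
      rw [div_eq_mul_one_div (2*(K:ℝ)) ((k:ℝ)^2)]
      apply mul_le_mul_of_nonneg_right hPcard (by positivity)
    linarith
  -- algebra: Σ (a j - abar)² = Σ a j² - m²/k
  have habar' : abar = m / k := by rw [habar, hsum]; ring
  have h1 : ∑ j, (a j - abar)^2 = (∑ j, (a j)^2) - m^2/k := by
    have e1 : ∀ j ∈ Finset.univ, (a j - abar)^2 = (a j)^2 - 2*abar*(a j) + abar^2 :=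
      fun j _ => by ring
    rw [Finset.sum_congr rfl e1, Finset.sum_add_distrib, Finset.sum_sub_distrib,
      ← Finset.mul_sum, hsum, Finset.sum_const, Finset.card_univ, Fintype.card_fin,
      nsmul_eq_mul, habar']
    field_simp
    ring
  -- conclude
  rcases le_or_gt (m * (1 - m) - 2 * K / k) 0 with hmax | hmax
  · rw [max_eq_right hmax, mul_zero]
    exact Finset.sum_nonneg fun j _ => sq_nonneg _
  · rw [max_eq_left (le_of_lt hmax), h1]
    have heq : (1/(k:ℝ)) * (m * (1 - m) - 2 * K / k) = m/k - 2*K/k^2 - m^2/k := by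
      field_simp
      ring
    rw [heq]
    linarith
end

section
/- Let V_1,...,V_k be i.i.d. Rademacher random variables and let V̄ = (1/k)·Σ_j V_j. For any Δ ≥ 0, E[ exp((k/4)·V̄²) · 1{ exp((k/4)·V̄²) > exp((k/4)·Δ²) } ] ≤ 3·e^{−kΔ²/4}. -/
open MeasureTheory ProbabilityTheory Real

lemma gauss_lin_eq (a b : ℝ) (ha : 0 < a) :
    (fun s : ℝ => exp (-a * s ^ 2 + b * s))
      = fun s : ℝ => exp (b ^ 2 / (4 * a)) * exp (-a * (s - b / (2 * a)) ^ 2) := by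
  funext s
  rw [← exp_add]
  congr 1
  field_simp
  ring

lemma integrable_gauss_lin (a b : ℝ) (ha : 0 < a) :
    Integrable (fun s : ℝ => exp (-a * s ^ 2 + b * s)) := by
  rw [gauss_lin_eq a b ha]
  exact ((integrable_exp_neg_mul_sq ha).comp_sub_right (b / (2 * a))).const_mul _

lemma integral_gauss_lin (a b : ℝ) (ha : 0 < a) :
    ∫ s : ℝ, exp (-a * s ^ 2 + b * s) = Real.sqrt (π / a) * exp (b ^ 2 / (4 * a)) := by
  rw [gauss_lin_eq a b ha, integral_const_mul]
  rw [show (fun s : ℝ => exp (-a * (s - b / (2 * a)) ^ 2))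
        = fun s : ℝ => (fun x : ℝ => exp (-a * x ^ 2)) (s - b / (2 * a)) from rfl]
  rw [integral_sub_right_eq_self (fun x : ℝ => exp (-a * x ^ 2)) (b / (2 * a))]
  rw [integral_gaussian]
  ring

/-- For i.i.d. Rademacher variables `V_1, …, V_k` with average `V̄`,
and any `Δ ≥ 0`,
`E[exp((k/4)V̄²)·1{exp((k/4)V̄²) > exp((k/4)Δ²)}] ≤ 3·e^{−kΔ²/4}`. -/
theorem stmt14 {Ω : Type*} [MeasurableSpace Ω] (μ : Measure Ω) [IsProbabilityMeasure μ]
    (k : ℕ) (hk : 0 < k) (V : Fin k → Ω → ℝ)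
    (hmeas : ∀ i, Measurable (V i))
    (hindep : iIndepFun V μ)
    (hdist : ∀ i, μ {ω | V i ω = 1} = 1 / 2 ∧ μ {ω | V i ω = -1} = 1 / 2)
    (Δ : ℝ) (hΔ : 0 ≤ Δ)
    (Vbar : Ω → ℝ) (hVbar : ∀ ω, Vbar ω = (1 / (k : ℝ)) * ∑ i, V i ω) :
    ∫ ω, exp (((k : ℝ) / 4) * Vbar ω ^ 2) *
        (if exp (((k : ℝ) / 4) * Δ ^ 2) < exp (((k : ℝ) / 4) * Vbar ω ^ 2)
          then (1 : ℝ) else 0) ∂μ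
      ≤ 3 * exp (-((k : ℝ) * Δ ^ 2) / 4) := by
  have hK : (0 : ℝ) < (k : ℝ) := Nat.cast_pos.mpr hk
  have hKne : ((k : ℝ)) ≠ 0 := hK.ne'
  have hVbarmeas : Measurable Vbar := by
    have h : Vbar = fun ω => (1 / (k : ℝ)) * ∑ i, V i ω := funext hVbar
    rw [h]
    exact (Finset.measurable_sum _ fun i _ => hmeas i).const_mul _
  -- each V i is ±1 a.e.
  have haeV : ∀ i, ∀ᵐ ω ∂μ, V i ω = 1 ∨ V i ω = -1 := by
    intro i
    have hA : MeasurableSet {ω | V i ω = 1} := hmeas i (measurableSet_singleton 1)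
    have hB : MeasurableSet {ω | V i ω = -1} := hmeas i (measurableSet_singleton (-1))
    have hdisj : Disjoint {ω | V i ω = 1} {ω | V i ω = -1} := by
      rw [Set.disjoint_left]
      intro ω h1 h2
      simp only [Set.mem_setOf_eq] at h1 h2
      rw [h1] at h2; norm_num at h2
    have hun : μ ({ω | V i ω = 1} ∪ {ω | V i ω = -1}) = 1 := by
      rw [measure_union hdisj hB, (hdist i).1, (hdist i).2]
      exact ENNReal.add_halves 1
    have h0 : μ ({ω | V i ω = 1} ∪ {ω | V i ω = -1})ᶜ = 0 :=
      (prob_compl_eq_zero_iff (hA.union hB)).mpr hun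
    have hset : {ω | ¬(V i ω = 1 ∨ V i ω = -1)} = ({ω | V i ω = 1} ∪ {ω | V i ω = -1})ᶜ := by
      ext ω
      simp [not_or]
    rw [ae_iff, hset]
    exact h0
  -- |Vbar| ≤ 1 a.e.
  have haebar : ∀ᵐ ω ∂μ, |Vbar ω| ≤ 1 := by
    filter_upwards [ae_all_iff.mpr haeV] with ω h
    rw [hVbar]
    have hsum : |∑ i, V i ω| ≤ (k : ℝ) := by
      calc |∑ i, V i ω| ≤ ∑ i, |V i ω| := Finset.abs_sum_le_sum_abs _ _
        _ ≤ ∑ _i : Fin k, (1 : ℝ) := by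
            refine Finset.sum_le_sum fun i _ => ?_
            rcases h i with h1 | h1 <;> rw [h1] <;> norm_num
        _ = (k : ℝ) := by simp
    rw [abs_mul, abs_of_nonneg (by positivity : (0:ℝ) ≤ 1 / (k:ℝ)),
      div_mul_eq_mul_div, one_mul, div_le_one hK]
    exact hsum
  -- mgf of a single V i
  have hmgf1 : ∀ i, ∀ t : ℝ, mgf (V i) μ t = Real.cosh t := by
    intro i t
    have hA : MeasurableSet {ω | V i ω = 1} := hmeas i (measurableSet_singleton 1)
    have hB : MeasurableSet {ω | V i ω = -1} := hmeas i (measurableSet_singleton (-1))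
    have hdisj : Disjoint {ω | V i ω = 1} {ω | V i ω = -1} := by
      rw [Set.disjoint_left]
      intro ω h1 h2
      simp only [Set.mem_setOf_eq] at h1 h2
      rw [h1] at h2; norm_num at h2
    have hint : Integrable (fun ω => exp (t * V i ω)) μ := by
      refine Integrable.mono' (integrable_const (exp |t|)) ?_ ?_
      · exact (((hmeas i).const_mul t).exp).aestronglyMeasurable
      · filter_upwards [haeV i] with ω h
        rw [Real.norm_eq_abs, abs_of_pos (exp_pos _), exp_le_exp]
        rcases h with h1 | h1 <;> rw [h1]
        · simpa using le_abs_self t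
        · simpa using neg_le_abs t
    have hun : μ ({ω | V i ω = 1} ∪ {ω | V i ω = -1}) = 1 := by
      rw [measure_union hdisj hB, (hdist i).1, (hdist i).2]
      exact ENNReal.add_halves 1
    have hnull : μ ({ω | V i ω = 1} ∪ {ω | V i ω = -1})ᶜ = 0 :=
      (prob_compl_eq_zero_iff (hA.union hB)).mpr hun
    have e0 : mgf (V i) μ t = ∫ ω, exp (t * V i ω) ∂μ := rfl
    rw [e0, ← integral_add_compl (hA.union hB) hint]
    have ec : ∫ ω in ({ω | V i ω = 1} ∪ {ω | V i ω = -1})ᶜ, exp (t * V i ω) ∂μ = 0 := by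
      rw [Measure.restrict_eq_zero.mpr hnull, integral_zero_measure]
    rw [ec, add_zero,
      setIntegral_union hdisj hB hint.integrableOn hint.integrableOn]
    have eA : ∫ ω in {ω | V i ω = 1}, exp (t * V i ω) ∂μ = (1/2 : ℝ) * exp t := by
      rw [setIntegral_congr_fun hA (g := fun _ => exp t) (fun ω hω => by
        simp only [Set.mem_setOf_eq] at hω; rw [hω, mul_one])]
      rw [setIntegral_const, measureReal_def, (hdist i).1]
      norm_num
    have eB : ∫ ω in {ω | V i ω = -1}, exp (t * V i ω) ∂μ = (1/2 : ℝ) * exp (-t) := by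
      rw [setIntegral_congr_fun hB (g := fun _ => exp (-t)) (fun ω hω => by
        simp only [Set.mem_setOf_eq] at hω; rw [hω]; ring_nf)]
      rw [setIntegral_const, measureReal_def, (hdist i).2]
      norm_num
    rw [eA, eB, Real.cosh_eq]
    ring
  -- mgf bound for Vbar
  have hmgfbar : ∀ a : ℝ, ∫ ω, exp (a * Vbar ω) ∂μ ≤ exp (a ^ 2 / (2 * (k:ℝ))) := by
    intro a
    have h1 : ∫ ω, exp (a * Vbar ω) ∂μ = ∫ ω, exp ((a / (k:ℝ)) * (∑ i, V i) ω) ∂μ := by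
      refine integral_congr_ae (Filter.Eventually.of_forall fun ω => ?_)
      show exp (a * Vbar ω) = exp (a / (k:ℝ) * (∑ i, V i) ω)
      rw [hVbar, Finset.sum_apply]
      congr 1
      field_simp
    have h2 : ∫ ω, exp ((a / (k:ℝ)) * (∑ i, V i) ω) ∂μ = mgf (∑ i, V i) μ (a / (k:ℝ)) := rfl
    rw [h1, h2, hindep.mgf_sum hmeas]
    rw [Finset.prod_congr rfl (fun i _ => hmgf1 i (a / (k:ℝ))), Finset.prod_const,
      Finset.card_univ, Fintype.card_fin]
    calc Real.cosh (a/(k:ℝ)) ^ k ≤ exp ((a/(k:ℝ))^2/2) ^ k :=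
          pow_le_pow_left₀ (Real.cosh_pos _).le (Real.cosh_le_exp_half_sq _) k
      _ = exp (a^2/(2*(k:ℝ))) := by
          rw [← Real.exp_nat_mul]
          congr 1
          field_simp
  -- integrability of the exponential moments
  have hintc : ∀ c : ℝ, Integrable (fun ω => exp ((k:ℝ)/4 * Vbar ω ^ 2 + c * Vbar ω)) μ := by
    intro c
    refine Integrable.mono' (integrable_const (exp ((k:ℝ)/4 + |c|))) ?_ ?_
    · exact ((((hVbarmeas.pow_const 2).const_mul ((k:ℝ)/4)).add
        (hVbarmeas.const_mul c)).exp).aestronglyMeasurable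
    · filter_upwards [haebar] with ω h
      rw [Real.norm_eq_abs, abs_of_pos (exp_pos _), exp_le_exp]
      have h1 : Vbar ω ^ 2 ≤ 1 := by nlinarith [abs_nonneg (Vbar ω), sq_abs (Vbar ω)]
      have h2 : c * Vbar ω ≤ |c| := by
        calc c * Vbar ω ≤ |c * Vbar ω| := le_abs_self _
          _ = |c| * |Vbar ω| := abs_mul _ _
          _ ≤ |c| * 1 := mul_le_mul_of_nonneg_left h (abs_nonneg _)
          _ = |c| := mul_one _
      nlinarith [hK]
  -- the key Gaussian-linearization bound
  have hkey : ∀ c : ℝ, ∫ ω, exp ((k:ℝ)/4 * Vbar ω ^ 2 + c * Vbar ω) ∂μ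
      ≤ Real.sqrt 2 * exp (c^2 / (k:ℝ)) := by
    intro c
    set sk : ℝ := Real.sqrt (k:ℝ) with hskdef
    have hsk2 : sk ^ 2 = (k:ℝ) := Real.sq_sqrt hK.le
    have hskpos : 0 < sk := Real.sqrt_pos.mpr hK
    have hπ : (0:ℝ) < Real.sqrt π := Real.sqrt_pos.mpr Real.pi_pos
    -- pointwise Gaussian representation
    have hpt : ∀ v : ℝ, exp ((k:ℝ)/4 * v ^ 2 + c * v)
        = (Real.sqrt π)⁻¹ * ∫ s : ℝ, exp (-(1:ℝ) * s^2 + (sk * s + c) * v) := by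
      intro v
      have e1 : (fun s : ℝ => exp (-(1:ℝ) * s^2 + (sk*s + c) * v))
          = fun s : ℝ => exp (-(1:ℝ) * s^2 + (sk*v) * s) * exp (c*v) := by
        funext s; rw [← exp_add]; congr 1; ring
      have h4 : (sk*v)^2/(4*1) = (k:ℝ)/4 * v^2 := by rw [mul_pow, hsk2]; ring
      rw [e1, integral_mul_const, integral_gauss_lin 1 (sk*v) one_pos, h4, div_one,
        mul_assoc, ← exp_add, ← mul_assoc, inv_mul_cancel₀ hπ.ne', one_mul]
    -- integrability on the product space
    have hFm : Measurable (fun p : Ω × ℝ => exp (-(1:ℝ) * p.2^2 + (sk * p.2 + c) * Vbar p.1)) := by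
      refine Measurable.exp (Measurable.add ?_ ?_)
      · exact (measurable_snd.pow_const 2).const_mul (-(1:ℝ))
      · exact ((measurable_snd.const_mul sk).add_const c).mul (hVbarmeas.comp measurable_fst)
    have hprodae : ∀ᵐ p ∂(μ.prod (volume : Measure ℝ)), |Vbar p.1| ≤ 1 := by
      rw [ae_iff]
      have h0 : μ {ω | ¬ |Vbar ω| ≤ 1} = 0 := ae_iff.mp haebar
      have : {p : Ω × ℝ | ¬ |Vbar p.1| ≤ 1} = Prod.fst ⁻¹' {ω | ¬ |Vbar ω| ≤ 1} := rfl
      rw [this]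
      exact Measure.quasiMeasurePreserving_fst.preimage_null h0
    have hg0int : Integrable (fun s : ℝ =>
        (exp (-(1:ℝ) * s^2 + sk*s) + exp (-(1:ℝ) * s^2 + (-sk)*s)) * exp |c|) := by
      exact ((integrable_gauss_lin 1 sk one_pos).add (integrable_gauss_lin 1 (-sk) one_pos)).mul_const _
    have hFint : Integrable (fun p : Ω × ℝ => exp (-(1:ℝ) * p.2^2 + (sk * p.2 + c) * Vbar p.1))
        (μ.prod (volume : Measure ℝ)) := by
      refine Integrable.mono' ((integrable_const (1:ℝ)).mul_prod hg0int)
        hFm.aestronglyMeasurable ?_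
      filter_upwards [hprodae] with p hp
      rw [Real.norm_eq_abs, abs_of_pos (exp_pos _), one_mul]
      have hb1 : (sk * p.2 + c) * Vbar p.1 ≤ |sk * p.2| + |c| := by
        calc (sk*p.2+c) * Vbar p.1 ≤ |(sk*p.2+c) * Vbar p.1| := le_abs_self _
          _ = |sk*p.2+c| * |Vbar p.1| := abs_mul _ _
          _ ≤ |sk*p.2+c| * 1 := mul_le_mul_of_nonneg_left hp (abs_nonneg _)
          _ ≤ |sk*p.2| + |c| := by rw [mul_one]; exact abs_add_le _ _
      calc exp (-(1:ℝ) * p.2^2 + (sk*p.2+c) * Vbar p.1)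
          ≤ exp (-(1:ℝ) * p.2^2 + |sk*p.2|) * exp |c| := by
            rw [← exp_add]; exact exp_le_exp.mpr (by linarith)
        _ ≤ (exp (-(1:ℝ) * p.2^2 + sk*p.2) + exp (-(1:ℝ) * p.2^2 + (-sk)*p.2)) * exp |c| := by
            refine mul_le_mul_of_nonneg_right ?_ (exp_pos _).le
            rcases abs_cases (sk * p.2) with ⟨h5, _⟩ | ⟨h5, _⟩
            · rw [h5]; exact le_add_of_nonneg_right (exp_pos _).le
            · rw [h5, show -(sk*p.2) = (-sk)*p.2 by ring]
              exact le_add_of_nonneg_left (exp_pos _).le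
    -- the chain of (in)equalities
    have hswap := integral_integral_swap
      (f := fun (ω : Ω) (s : ℝ) => exp (-(1:ℝ) * s^2 + (sk * s + c) * Vbar ω)) hFint
    calc ∫ ω, exp ((k:ℝ)/4 * Vbar ω ^ 2 + c * Vbar ω) ∂μ
        = ∫ ω, ((Real.sqrt π)⁻¹ * ∫ s : ℝ, exp (-(1:ℝ) * s^2 + (sk * s + c) * Vbar ω)) ∂μ :=
          integral_congr_ae (Filter.Eventually.of_forall fun ω => hpt (Vbar ω))
      _ = (Real.sqrt π)⁻¹ * ∫ ω, (∫ s : ℝ, exp (-(1:ℝ) * s^2 + (sk * s + c) * Vbar ω)) ∂μ :=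
          integral_const_mul _ _
      _ = (Real.sqrt π)⁻¹ * ∫ s : ℝ, (∫ ω, exp (-(1:ℝ) * s^2 + (sk * s + c) * Vbar ω) ∂μ) := by
          rw [hswap]
      _ ≤ (Real.sqrt π)⁻¹ * ∫ s : ℝ, exp (-(1/2:ℝ) * s^2 + (c/sk) * s) * exp (c^2/(2*(k:ℝ))) := by
          refine mul_le_mul_of_nonneg_left ?_ (inv_nonneg.mpr (Real.sqrt_nonneg _))
          refine integral_mono hFint.integral_prod_right
            ((integrable_gauss_lin (1/2) (c/sk) (by norm_num)).mul_const _) fun s => ?_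
          have e2 : (fun ω => exp (-(1:ℝ) * s^2 + (sk*s + c) * Vbar ω))
              = fun ω => exp ((sk*s + c) * Vbar ω) * exp (-(1:ℝ) * s^2) := by
            funext ω; rw [← exp_add]; congr 1; ring
          show (∫ ω, exp (-(1:ℝ) * s^2 + (sk*s + c) * Vbar ω) ∂μ) ≤ _
          rw [e2, integral_mul_const]
          calc (∫ ω, exp ((sk*s+c) * Vbar ω) ∂μ) * exp (-(1:ℝ) * s^2)
              ≤ exp ((sk*s+c)^2/(2*(k:ℝ))) * exp (-(1:ℝ) * s^2) :=
                mul_le_mul_of_nonneg_right (hmgfbar _) (exp_pos _).le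
            _ = exp (-(1/2:ℝ) * s^2 + (c/sk) * s) * exp (c^2/(2*(k:ℝ))) := by
                rw [← exp_add, ← exp_add]
                congr 1
                rw [← hsk2]
                field_simp
                ring
      _ = Real.sqrt 2 * exp (c^2 / (k:ℝ)) := by
          rw [integral_mul_const, integral_gauss_lin (1/2) (c/sk) (by norm_num)]
          have h6 : (c/sk)^2/(4*(1/2:ℝ)) = c^2/(2*(k:ℝ)) := by
            rw [div_pow, hsk2]; ring
          have h7 : Real.sqrt (π/(1/2)) = Real.sqrt 2 * Real.sqrt π := by
            rw [show π/(1/2:ℝ) = 2*π by ring, Real.sqrt_mul (by norm_num) π]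
          have h8 : c^2/(2*(k:ℝ)) + c^2/(2*(k:ℝ)) = c^2/(k:ℝ) := by
            field_simp
            ring
          rw [h6, h7, mul_assoc, mul_assoc, ← exp_add, h8, ← mul_assoc,
            mul_comm (Real.sqrt π)⁻¹ (Real.sqrt 2), mul_assoc, ← mul_assoc (Real.sqrt π)⁻¹,
            inv_mul_cancel₀ hπ.ne', one_mul]
  -- main assembly
  set l : ℝ := (k:ℝ) * Δ / 2 with hldef
  have hl0 : 0 ≤ l := by positivity
  have hS : ∀ ω, exp (((k:ℝ)/4) * Vbar ω ^ 2) *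
      (if exp (((k:ℝ)/4) * Δ ^ 2) < exp (((k:ℝ)/4) * Vbar ω ^ 2) then (1:ℝ) else 0)
      ≤ exp (-(l*Δ)) * (exp ((k:ℝ)/4 * Vbar ω ^ 2 + l * Vbar ω)
          + exp ((k:ℝ)/4 * Vbar ω ^ 2 + (-l) * Vbar ω)) := by
    intro ω
    by_cases h : exp (((k:ℝ)/4) * Δ ^ 2) < exp (((k:ℝ)/4) * Vbar ω ^ 2)
    · rw [if_pos h, mul_one]
      have hΔv : Δ < |Vbar ω| := by
        have h1 := exp_lt_exp.mp h
        have h2 : Δ^2 < Vbar ω ^ 2 := by nlinarith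
        by_contra hcon
        push_neg at hcon
        nlinarith [sq_abs (Vbar ω), abs_nonneg (Vbar ω)]
      have h1 : exp (l*Δ) ≤ exp (l * Vbar ω) + exp (-(l * Vbar ω)) := by
        have h2 : l * Δ ≤ l * |Vbar ω| := mul_le_mul_of_nonneg_left hΔv.le hl0
        calc exp (l*Δ) ≤ exp (l * |Vbar ω|) := exp_le_exp.mpr h2
          _ ≤ exp (l * Vbar ω) + exp (-(l * Vbar ω)) := by
              rcases abs_cases (Vbar ω) with ⟨h5, _⟩ | ⟨h5, _⟩
              · rw [h5]; exact le_add_of_nonneg_right (exp_pos _).le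
              · rw [h5, mul_neg]; exact le_add_of_nonneg_left (exp_pos _).le
      calc exp (((k:ℝ)/4) * Vbar ω ^ 2)
          = exp (-(l*Δ)) * (exp (((k:ℝ)/4) * Vbar ω ^ 2) * exp (l*Δ)) := by
            rw [← exp_add, ← exp_add]; congr 1; ring
        _ ≤ exp (-(l*Δ)) * (exp (((k:ℝ)/4) * Vbar ω ^ 2) * (exp (l * Vbar ω) + exp (-(l * Vbar ω)))) := by
            refine mul_le_mul_of_nonneg_left ?_ (exp_pos _).le
            exact mul_le_mul_of_nonneg_left h1 (exp_pos _).le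
        _ = exp (-(l*Δ)) * (exp ((k:ℝ)/4 * Vbar ω ^ 2 + l * Vbar ω)
              + exp ((k:ℝ)/4 * Vbar ω ^ 2 + (-l) * Vbar ω)) := by
            rw [mul_add, ← exp_add, ← exp_add]
            congr 2
            ring
    · rw [if_neg h, mul_zero]
      positivity
  have hRHSint : Integrable (fun ω => exp (-(l*Δ)) * (exp ((k:ℝ)/4 * Vbar ω ^ 2 + l * Vbar ω)
      + exp ((k:ℝ)/4 * Vbar ω ^ 2 + (-l) * Vbar ω))) μ :=
    (((hintc l).add (hintc (-l))).const_mul _)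
  calc ∫ ω, exp (((k:ℝ)/4) * Vbar ω ^ 2) *
        (if exp (((k:ℝ)/4) * Δ ^ 2) < exp (((k:ℝ)/4) * Vbar ω ^ 2) then (1:ℝ) else 0) ∂μ
      ≤ ∫ ω, exp (-(l*Δ)) * (exp ((k:ℝ)/4 * Vbar ω ^ 2 + l * Vbar ω)
          + exp ((k:ℝ)/4 * Vbar ω ^ 2 + (-l) * Vbar ω)) ∂μ := by
        refine integral_mono_of_nonneg (Filter.Eventually.of_forall fun ω => ?_) hRHSint
          (Filter.Eventually.of_forall hS)
        have : (0:ℝ) ≤ (if exp (((k:ℝ)/4) * Δ ^ 2) < exp (((k:ℝ)/4) * Vbar ω ^ 2) then (1:ℝ) else 0) := by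
          split <;> norm_num
        positivity
    _ = exp (-(l*Δ)) * ((∫ ω, exp ((k:ℝ)/4 * Vbar ω ^ 2 + l * Vbar ω) ∂μ)
          + (∫ ω, exp ((k:ℝ)/4 * Vbar ω ^ 2 + (-l) * Vbar ω) ∂μ)) := by
        rw [integral_const_mul, integral_add (hintc l) (hintc (-l))]
    _ ≤ exp (-(l*Δ)) * (Real.sqrt 2 * exp (l^2/(k:ℝ)) + Real.sqrt 2 * exp ((-l)^2/(k:ℝ))) := by
        refine mul_le_mul_of_nonneg_left (add_le_add (hkey l) (hkey (-l))) (exp_pos _).le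
    _ = 2 * Real.sqrt 2 * exp (-(l*Δ) + l^2/(k:ℝ)) := by
        rw [neg_sq, exp_add]
        ring
    _ ≤ 3 * exp (-((k:ℝ) * Δ ^ 2) / 4) := by
        have hexp : -(l*Δ) + l^2/(k:ℝ) = -((k:ℝ) * Δ ^ 2) / 4 := by
          rw [hldef]
          field_simp
          ring
        rw [hexp]
        refine mul_le_mul_of_nonneg_right ?_ (exp_pos _).le
        nlinarith [Real.sq_sqrt (show (0:ℝ) ≤ 2 by norm_num), Real.sqrt_nonneg 2]
end

section
/- Let L: ℝ^d → ℝ be twice differentiable and μ-strongly convex on a closed convex set C (i.e., ∇²L(θ) ⪰ μI for θ ∈ C), alongside a perturbed objective L'(θ) = L(θ) + (1/n)·(ℓ'(θ) − ℓ(θ)) where ‖∇ℓ(θ)‖₂ ≤ β_L and ‖∇ℓ'(θ)‖₂ ≤ β_L for all θ ∈ C. If θ̂ minimizes L over C and θ̂' minimizes L' over C, then ‖θ̂ − θ̂'‖₂ ≤ 2β_L/(μn). -/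
open RealInnerProductSpace

/-- Variational inequality for a minimizer of a differentiable function over a convex set. -/
lemma vi_aux {d : ℕ} {C : Set (EuclideanSpace ℝ (Fin d))} (hCconv : Convex ℝ C)
    {f : EuclideanSpace ℝ (Fin d) → ℝ} {g θhat : EuclideanSpace ℝ (Fin d)}
    (hg : HasGradientAt f g θhat) (hmem : θhat ∈ C) (hmin : ∀ θ ∈ C, f θhat ≤ f θ)
    {θ : EuclideanSpace ℝ (Fin d)} (hθ : θ ∈ C) : 0 ≤ ⟪g, θ - θhat⟫ := by
  have hcone : θ - θhat ∈ posTangentConeAt C θhat :=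
    sub_mem_posTangentConeAt_of_segment_subset (hCconv.segment_subset hmem hθ)
  have hminon : IsLocalMinOn f C θhat := by
    apply IsMinOn.localize
    intro x hx
    exact hmin x hx
  have := hminon.hasFDerivWithinAt_nonneg hg.hasFDerivAt.hasFDerivWithinAt hcone
  simpa [InnerProductSpace.toDual_apply_apply] using this

/-- Stability of constrained M-estimation: on a closed convex set `C`, if `L`
is `μ`-strongly convex (expressed via the gradient monotonicity implied by
`∇²L ⪰ μI`), `L'(θ) = L(θ) + (1/n)(ℓ'(θ) − ℓ(θ))` with `‖∇ℓ‖, ‖∇ℓ'‖ ≤ β_L` on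
`C`, and `θ̂, θ̂'` minimize `L, L'` over `C` respectively, then
`‖θ̂ − θ̂'‖ ≤ 2β_L/(μn)`. -/
theorem stmt16 {d : ℕ}
    (C : Set (EuclideanSpace ℝ (Fin d))) (hCne : C.Nonempty) (hCclosed : IsClosed C)
    (hCconv : Convex ℝ C)
    (n : ℕ) (hn : 0 < n) (μ βL : ℝ) (hμ : 0 < μ) (hβL : 0 ≤ βL)
    (L L' ℓ ℓ' : EuclideanSpace ℝ (Fin d) → ℝ)
    (gL gℓ gℓ' : EuclideanSpace ℝ (Fin d) → EuclideanSpace ℝ (Fin d))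
    (hgL : ∀ θ, HasGradientAt L (gL θ) θ)
    (hgℓ : ∀ θ, HasGradientAt ℓ (gℓ θ) θ)
    (hgℓ' : ∀ θ, HasGradientAt ℓ' (gℓ' θ) θ)
    (hstrong : ∀ θ ∈ C, ∀ θ' ∈ C, μ * ‖θ' - θ‖ ^ 2 ≤ ⟪gL θ' - gL θ, θ' - θ⟫)
    (hℓbd : ∀ θ ∈ C, ‖gℓ θ‖ ≤ βL) (hℓ'bd : ∀ θ ∈ C, ‖gℓ' θ‖ ≤ βL)
    (hL' : ∀ θ, L' θ = L θ + (1 / (n : ℝ)) * (ℓ' θ - ℓ θ))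
    (θhat θhat' : EuclideanSpace ℝ (Fin d))
    (hθhat : θhat ∈ C ∧ ∀ θ ∈ C, L θhat ≤ L θ)
    (hθhat' : θhat' ∈ C ∧ ∀ θ ∈ C, L' θhat' ≤ L' θ) :
    ‖θhat - θhat'‖ ≤ 2 * βL / (μ * n) := by
  obtain ⟨hmem, hmin⟩ := hθhat
  obtain ⟨hmem', hmin'⟩ := hθhat'
  have hnpos : (0 : ℝ) < n := by exact_mod_cast hn
  -- gradient of L'
  have hgL' : ∀ θ, HasGradientAt L' (gL θ + (1 / (n : ℝ)) • (gℓ' θ - gℓ θ)) θ := by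
    intro θ
    have h1 : HasFDerivAt L' (InnerProductSpace.toDual ℝ _ (gL θ) +
        (1 / (n : ℝ)) • (InnerProductSpace.toDual ℝ _ (gℓ' θ) -
          InnerProductSpace.toDual ℝ _ (gℓ θ))) θ := by
      have := ((hgL θ).hasFDerivAt.add
        (((hgℓ' θ).hasFDerivAt.sub (hgℓ θ).hasFDerivAt).const_smul (1 / (n : ℝ))))
      apply this.congr_of_eventuallyEq
      filter_upwards with x
      simp [hL' x, smul_eq_mul, mul_comm]
    rw [hasGradientAt_iff_hasFDerivAt]
    refine h1.congr_fderiv ?_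
    simp [map_add, map_smul, map_sub]
  -- variational inequalities
  have VI1 : 0 ≤ ⟪gL θhat, θhat' - θhat⟫ := vi_aux hCconv (hgL θhat) hmem hmin hmem'
  have VI2 : 0 ≤ ⟪gL θhat' + (1 / (n : ℝ)) • (gℓ' θhat' - gℓ θhat'), θhat - θhat'⟫ :=
    vi_aux hCconv (hgL' θhat') hmem' hmin' hmem
  set v := θhat' - θhat with hv
  have key : μ * ‖v‖ ^ 2 ≤ (1 / (n : ℝ)) * (2 * βL) * ‖v‖ := by
    have h1 := hstrong θhat hmem θhat' hmem'
    have h2 : ⟪gL θhat' - gL θhat, v⟫ ≤ (1 / (n : ℝ)) * ⟪gℓ' θhat' - gℓ θhat', θhat - θhat'⟫ := by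
      have e1 : ⟪gL θhat', θhat - θhat'⟫ +
          (1 / (n : ℝ)) * ⟪gℓ' θhat' - gℓ θhat', θhat - θhat'⟫ =
          ⟪gL θhat' + (1 / (n : ℝ)) • (gℓ' θhat' - gℓ θhat'), θhat - θhat'⟫ := by
        rw [inner_add_left, real_inner_smul_left]
      have e2 : ⟪gL θhat' - gL θhat, v⟫ = -⟪gL θhat', θhat - θhat'⟫ - ⟪gL θhat, v⟫ := by
        rw [inner_sub_left, hv]
        rw [show θhat - θhat' = -(θhat' - θhat) by abel, inner_neg_right]
        ring
      rw [e2]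
      nlinarith [VI1, VI2, e1]
    have h3 : ⟪gℓ' θhat' - gℓ θhat', θhat - θhat'⟫ ≤ 2 * βL * ‖v‖ := by
      calc ⟪gℓ' θhat' - gℓ θhat', θhat - θhat'⟫
          ≤ ‖gℓ' θhat' - gℓ θhat'‖ * ‖θhat - θhat'‖ := real_inner_le_norm _ _
        _ ≤ 2 * βL * ‖v‖ := by
            have hb := (norm_sub_le (gℓ' θhat') (gℓ θhat')).trans
              (add_le_add (hℓ'bd θhat' hmem') (hℓbd θhat' hmem'))
            have : ‖θhat - θhat'‖ = ‖v‖ := by rw [hv, norm_sub_rev]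
            rw [this]
            have hvnn : (0:ℝ) ≤ ‖v‖ := norm_nonneg _
            nlinarith
    calc μ * ‖v‖ ^ 2 ≤ ⟪gL θhat' - gL θhat, v⟫ := h1
      _ ≤ (1 / (n : ℝ)) * ⟪gℓ' θhat' - gℓ θhat', θhat - θhat'⟫ := h2
      _ ≤ (1 / (n : ℝ)) * (2 * βL * ‖v‖) := by
          apply mul_le_mul_of_nonneg_left h3 (by positivity)
      _ = (1 / (n : ℝ)) * (2 * βL) * ‖v‖ := by ring
  have hnorm : ‖θhat - θhat'‖ = ‖v‖ := by rw [hv, norm_sub_rev]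
  rw [hnorm]
  rcases eq_or_lt_of_le (norm_nonneg v) with h0 | h0
  · rw [← h0]; positivity
  · have : μ * ‖v‖ ≤ (1 / (n : ℝ)) * (2 * βL) := by
      have := key
      nlinarith
    rw [le_div_iff₀ (by positivity)]
    have h4 : μ * ‖v‖ * n ≤ 1 / (n : ℝ) * (2 * βL) * n :=
      mul_le_mul_of_nonneg_right this (le_of_lt hnpos)
    have h5 : 1 / (n : ℝ) * (2 * βL) * n = 2 * βL := by field_simp
    nlinarith
end
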